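/- arXiv:math/0010231 — 3 statements merged into one kernel-verified Lean document; each statement's English description precedes it below -/
import Mathlib

section
/- Let τ(X) = -P·Xᵀ·P⁻¹ on sl(3,ℂ) with P = [[0,1,0],[-1,0,0],[0,0,1]]. Then the (-i)-eigenspace { X ∈ sl(3,ℂ) : τ(X) = -i·X } equals { [[0,0,-ia],[0,0,b],[-ib,a,0]] : a,b ∈ ℂ }, the (+i)-eigenspace { X : τ(X) = i·X } equals { [[0,0,ia],[0,0,b],[ib,a,0]] : a,b ∈ ℂ }, and the (+i)-eigenspace is the image of the (-i)-eigenspace under the map X ↦ -X* (negative conjugate transpose). -/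
/-!
Since `P` is real orthogonal, `P⁻¹ = Pᴴ`, and therefore `τ` commutes with conjugate
transposition. Consequently `X ↦ -Xᴴ` maps the `c`-eigenspace of `τ` onto the `c̄`-eigenspace,
which gives the last claim without computing either eigenspace. In coordinates `τ` permutes
the entries of `X` up to sign; when `c² = -1` the eigenvalue equations force the diagonal and
the entries `X₀₁`, `X₁₀` to vanish and leave only `X₀₂ = c X₂₁` and `X₂₀ = c X₁₂`.
-/

open Matrix

noncomputable section

/-- The matrix `P = [[0,1,0],[-1,0,0],[0,0,1]]`. -/
def Pmat : Matrix (Fin 3) (Fin 3) ℂ := !![0,1,0; -1,0,0; 0,0,1]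

/-- `τ(X) = -P ⬝ Xᵀ ⬝ P⁻¹`. -/
def tauLie (X : Matrix (Fin 3) (Fin 3) ℂ) : Matrix (Fin 3) (Fin 3) ℂ :=
  -(Pmat * Xᵀ * Pmat⁻¹)

/-- The `(-i)`-eigenspace of `τ` on `sl(3,ℂ)`. -/
def Eneg : Set (Matrix (Fin 3) (Fin 3) ℂ) :=
  {X | X.trace = 0 ∧ tauLie X = -(Complex.I • X)}

/-- The `(+i)`-eigenspace of `τ` on `sl(3,ℂ)`. -/
def Epos : Set (Matrix (Fin 3) (Fin 3) ℂ) :=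
  {X | X.trace = 0 ∧ tauLie X = Complex.I • X}

open Complex

lemma Pmat_inv_eq_conjTranspose : Pmat⁻¹ = Pmatᴴ := by
  refine inv_eq_right_inv ?_
  ext i j
  fin_cases i <;> fin_cases j <;> simp [Pmat, mul_apply, Fin.sum_univ_three]

lemma tauLie_apply (X : Matrix (Fin 3) (Fin 3) ℂ) :
    tauLie X = !![-X 1 1, X 0 1, -X 2 1; X 1 0, -X 0 0, X 2 0; -X 1 2, X 0 2, -X 2 2] := by
  ext i j
  rw [tauLie, Pmat_inv_eq_conjTranspose, neg_apply, mul_apply]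
  fin_cases i <;> fin_cases j <;> simp [Pmat, mul_apply, Fin.sum_univ_three]

lemma tauLie_conjTranspose (X : Matrix (Fin 3) (Fin 3) ℂ) : tauLie Xᴴ = (tauLie X)ᴴ := by
  simp only [tauLie, Pmat_inv_eq_conjTranspose, conjTranspose_neg, conjTranspose_mul,
    conjTranspose_conjTranspose, Matrix.mul_assoc]
  rfl

def tauEigenspace (c : ℂ) : Set (Matrix (Fin 3) (Fin 3) ℂ) :=
  {X | X.trace = 0 ∧ tauLie X = c • X}

lemma Eneg_eq_tauEigenspace : Eneg = tauEigenspace (-I) := by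
  simp only [Eneg, tauEigenspace, neg_smul]

lemma Epos_eq_tauEigenspace : Epos = tauEigenspace I := rfl

lemma tauEigenspace_eq_of_sq_eq_neg_one {c : ℂ} (hc : c ^ 2 = -1) :
    tauEigenspace c = {X | ∃ a b : ℂ, X = !![0, 0, c * a; 0, 0, b; c * b, a, 0]} := by
  ext X
  constructor
  · rintro ⟨-, hτ⟩
    rw [tauLie_apply] at hτ
    have h i j := congrFun (congrFun hτ i) j
    have h00 := h 0 0; have h01 := h 0 1; have h10 := h 1 0; have h11 := h 1 1
    have h12 := h 1 2; have h21 := h 2 1; have h22 := h 2 2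
    simp only [Fin.isValue, of_apply, cons_val', cons_val_zero, cons_val_one, cons_val, cons_val_fin_one,
      Matrix.smul_apply, smul_eq_mul] at h00 h01 h10 h11 h12 h21 h22
    refine ⟨X 2 1, X 1 2, ?_⟩
    ext i j
    fin_cases i <;> fin_cases j <;> simp <;> grind
  · rintro ⟨a, b, rfl⟩
    refine ⟨by simp [trace_fin_three], ?_⟩
    rw [tauLie_apply]
    ext i j
    fin_cases i <;> fin_cases j <;> simp <;> grind

lemma neg_conjTranspose_mem_tauEigenspace {c : ℂ} {X : Matrix (Fin 3) (Fin 3) ℂ}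
    (hX : X ∈ tauEigenspace c) : -Xᴴ ∈ tauEigenspace (star c) := by
  obtain ⟨htr, hτ⟩ := hX
  refine ⟨by simp [trace_conjTranspose, htr], ?_⟩
  have tauLie_neg : tauLie (-Xᴴ) = -tauLie Xᴴ := by simp [tauLie]
  rw [tauLie_neg, tauLie_conjTranspose, hτ, conjTranspose_smul, smul_neg]

lemma image_neg_conjTranspose_tauEigenspace (c : ℂ) :
    (fun X : Matrix (Fin 3) (Fin 3) ℂ => -Xᴴ) '' tauEigenspace c = tauEigenspace (star c) :=
  Set.Subset.antisymm (Set.image_subset_iff.2 fun _ => neg_conjTranspose_mem_tauEigenspace)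
    fun Y hY => ⟨-Yᴴ, by simpa using neg_conjTranspose_mem_tauEigenspace hY, by simp⟩

theorem pm_i_eigenspaces :
    -- the (-i)-eigenspace is { [[0,0,-ia],[0,0,b],[-ib,a,0]] }
    (Eneg = {X | ∃ a b : ℂ,
      X = !![0, 0, -(Complex.I * a); 0, 0, b; -(Complex.I * b), a, 0]}) ∧
    -- the (+i)-eigenspace is { [[0,0,ia],[0,0,b],[ib,a,0]] }
    (Epos = {X | ∃ a b : ℂ,
      X = !![0, 0, Complex.I * a; 0, 0, b; Complex.I * b, a, 0]}) ∧
    -- the (+i)-eigenspace is the image of the (-i)-eigenspace under X ↦ -X*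
    (Epos = (fun X : Matrix (Fin 3) (Fin 3) ℂ => -Xᴴ) '' Eneg) := by
  refine ⟨?_, ?_, ?_⟩
  · rw [Eneg_eq_tauEigenspace, tauEigenspace_eq_of_sq_eq_neg_one (by rw [neg_sq, I_sq])]
    simp only [neg_mul]
  · rw [Epos_eq_tauEigenspace, tauEigenspace_eq_of_sq_eq_neg_one I_sq]
  · rw [Eneg_eq_tauEigenspace, Epos_eq_tauEigenspace, image_neg_conjTranspose_tauEigenspace,
      star_neg, star_def, conj_I, neg_neg]
end
end

section
/- Let τ(X) = -P·Xᵀ·P⁻¹ on sl(3,ℂ) with P = [[0,1,0],[-1,0,0],[0,0,1]], and let ε = (1/2)·[[0,0,1],[0,0,-i],[-1,i,0]]. For k ∈ SU(2) let Q_k = [[k,0],[0,1]] ∈ SU(3) (block-diagonal). Then the set of nonzero elements of the (-i)-eigenspace { X ∈ sl(3,ℂ) : τ(X) = -i·X } is exactly the orbit { r · Q_k · ε · Q_k⁻¹ : r ∈ ℝ, r > 0, k ∈ SU(2) }. -/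
open Matrix

noncomputable section

/-- `ε = (1/2)·[[0,0,1],[0,0,-i],[-1,i,0]]`. -/
def epsMat : Matrix (Fin 3) (Fin 3) ℂ :=
  (1 / 2 : ℂ) • !![0, 0, 1; 0, 0, -Complex.I; -1, Complex.I, 0]

/-- `Q_k = [[k,0],[0,1]]` for `k ∈ SU(2)`. -/
def Qk (k : Matrix (Fin 2) (Fin 2) ℂ) : Matrix (Fin 3) (Fin 3) ℂ :=
  !![k 0 0, k 0 1, 0; k 1 0, k 1 1, 0; 0, 0, 1]

lemma Pinv : Pmat⁻¹ = !![0,-1,0; 1,0,0; 0,0,1] := by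
  apply inv_eq_right_inv
  ext i j
  fin_cases i <;> fin_cases j <;>
    simp [Pmat, Matrix.mul_apply, Fin.sum_univ_three, Matrix.one_apply,
      Matrix.vecHead, Matrix.vecTail]

lemma Qk_mul (k m : Matrix (Fin 2) (Fin 2) ℂ) : Qk k * Qk m = Qk (k * m) := by
  ext i j
  fin_cases i <;> fin_cases j <;>
    simp [Qk, Matrix.mul_apply, Fin.sum_univ_three, Fin.sum_univ_two,
      Matrix.vecHead, Matrix.vecTail]

lemma Qk_one : Qk 1 = 1 := by
  ext i j
  fin_cases i <;> fin_cases j <;>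
    simp [Qk, Matrix.one_apply, Matrix.vecHead, Matrix.vecTail]

lemma Qk_inv (k : Matrix (Fin 2) (Fin 2) ℂ) (h : k * star k = 1) :
    (Qk k)⁻¹ = Qk (star k) := by
  apply inv_eq_right_inv
  rw [Qk_mul, h, Qk_one]

lemma conj_form (k m : Matrix (Fin 2) (Fin 2) ℂ) :
    Qk k * epsMat * Qk m = (1/2 : ℂ) •
      !![0, 0, k 0 0 - Complex.I * k 0 1;
         0, 0, k 1 0 - Complex.I * k 1 1;
         -(m 0 0) + Complex.I * m 1 0, -(m 0 1) + Complex.I * m 1 1, 0] := by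
  ext i j
  fin_cases i <;> fin_cases j <;>
    simp [Qk, epsMat, Matrix.mul_apply, Fin.sum_univ_three,
      Matrix.vecHead, Matrix.vecTail] <;> ring

lemma star_su2 (k : Matrix (Fin 2) (Fin 2) ℂ) (hk : k ∈ Matrix.unitaryGroup (Fin 2) ℂ)
    (hdet : k.det = 1) : star k = !![k 1 1, -(k 0 1); -(k 1 0), k 0 0] := by
  have h2 : star k * k = 1 := (Matrix.mem_unitaryGroup_iff'.mp hk)
  have hm : k * !![k 1 1, -(k 0 1); -(k 1 0), k 0 0] = 1 := by
    rw [← Matrix.adjugate_fin_two, Matrix.mul_adjugate, hdet, one_smul]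
  calc star k = star k * (k * !![k 1 1, -(k 0 1); -(k 1 0), k 0 0]) := by rw [hm, mul_one]
    _ = (star k * k) * !![k 1 1, -(k 0 1); -(k 1 0), k 0 0] := by rw [mul_assoc]
    _ = _ := by rw [h2, one_mul]

lemma forward (r : ℝ) (hr : 0 < r) (k : Matrix (Fin 2) (Fin 2) ℂ)
    (hk : k ∈ Matrix.unitaryGroup (Fin 2) ℂ) (hdet : k.det = 1) :
    ((r : ℂ) • (Qk k * epsMat * (Qk k)⁻¹)).trace = 0 ∧
    tauLie ((r : ℂ) • (Qk k * epsMat * (Qk k)⁻¹)) =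
      -(Complex.I • ((r : ℂ) • (Qk k * epsMat * (Qk k)⁻¹))) ∧
    ((r : ℂ) • (Qk k * epsMat * (Qk k)⁻¹)) ≠ 0 := by
  have h1 : k * star k = 1 := Matrix.mem_unitaryGroup_iff.mp hk
  have hform : Qk k * epsMat * (Qk k)⁻¹ = (1/2 : ℂ) •
      !![0, 0, k 0 0 - Complex.I * k 0 1;
         0, 0, k 1 0 - Complex.I * k 1 1;
         -(k 1 1) + Complex.I * (-(k 1 0)), -(-(k 0 1)) + Complex.I * (k 0 0), 0] := by
    rw [Qk_inv k h1, star_su2 k hk hdet, conj_form]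
    norm_num
  rw [hform]
  refine ⟨?_, ?_, ?_⟩
  · simp [Matrix.trace_fin_three, Matrix.smul_apply, Matrix.vecHead, Matrix.vecTail]
  · simp only [tauLie, Pinv]
    ext i j
    fin_cases i <;> fin_cases j <;>
      simp [Pmat, Matrix.mul_apply, Fin.sum_univ_three, Complex.I_sq,
        Matrix.smul_apply, Matrix.transpose_apply, Matrix.neg_apply,
        Matrix.vecHead, Matrix.vecTail, Matrix.vecMul, dotProduct] <;> ring_nf <;>
      simp [Complex.I_sq] <;> ring
  · intro h0
    have hdet' : k 0 0 * k 1 1 - k 0 1 * k 1 0 = 1 := by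
      rw [← Matrix.det_fin_two]; exact hdet
    have hrne : (r : ℂ) ≠ 0 := by
      exact_mod_cast Complex.ofReal_ne_zero.mpr (ne_of_gt hr)
    have e1 := congrFun (congrFun h0 0) 2
    have e2 := congrFun (congrFun h0 1) 2
    simp [Matrix.smul_apply, Matrix.vecHead, Matrix.vecTail] at e1 e2
    rcases e1 with h | hA
    · exact hr.ne' h
    rcases e2 with h | hB
    · exact hr.ne' h
    rw [sub_eq_zero] at hA hB
    exact zero_ne_one (by rw [← hdet', hA, hB]; ring : (0:ℂ) = 1)

lemma eigen_form (X : Matrix (Fin 3) (Fin 3) ℂ) (h2 : tauLie X = -(Complex.I • X)) :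
    X = !![0,0,X 0 2; 0,0,X 1 2; -Complex.I * X 1 2, Complex.I * X 0 2, 0] := by
  have h2' : -(Pmat * Xᵀ * !![0,-1,0; 1,0,0; 0,0,1]) = -(Complex.I • X) := by
    rw [← Pinv]; exact h2
  have e := fun i j => congrFun (congrFun h2' i) j
  have e00 := e 0 0; have e01 := e 0 1; have e02 := e 0 2
  have e10 := e 1 0; have e11 := e 1 1; have e12 := e 1 2
  have e22 := e 2 2
  simp only [Matrix.neg_apply, Matrix.smul_apply, Matrix.mul_apply, Fin.sum_univ_three,
    Matrix.transpose_apply, neg_eq_iff_eq_neg]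
    at e00 e01 e02 e10 e11 e12 e22
  simp [Pmat, Matrix.vecHead, Matrix.vecTail]
    at e00 e01 e02 e10 e11 e12 e22
  have hI : (1 + Complex.I) ≠ 0 := by
    simp [Complex.ext_iff]
  have hI' : (1 - Complex.I) ≠ 0 := by
    simp [Complex.ext_iff]
  have h00 : X 0 0 = 0 := by
    linear_combination (1/2 : ℂ)*e11 + (Complex.I/2)*e00 + (X 0 0/2)*Complex.I_sq
  have h11 : X 1 1 = 0 := by
    linear_combination (1/2 : ℂ)*e00 + (Complex.I/2)*e11 + (X 1 1/2)*Complex.I_sq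
  have h01 : X 0 1 = 0 := by
    have hm : (1 + Complex.I) * X 0 1 = 0 := by linear_combination -e01
    rcases mul_eq_zero.mp hm with h | h
    · exact absurd h hI
    · exact h
  have h10 : X 1 0 = 0 := by
    have hm : (1 + Complex.I) * X 1 0 = 0 := by linear_combination -e10
    rcases mul_eq_zero.mp hm with h | h
    · exact absurd h hI
    · exact h
  have h22 : X 2 2 = 0 := by
    have hm : (1 - Complex.I) * X 2 2 = 0 := by linear_combination e22
    rcases mul_eq_zero.mp hm with h | h
    · exact absurd h hI'
    · exact h
  have h20 : X 2 0 = -Complex.I * X 1 2 := by linear_combination -e12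
  have h21 : X 2 1 = Complex.I * X 0 2 := e02
  ext i j
  fin_cases i <;> fin_cases j <;>
    simp [Matrix.vecHead, Matrix.vecTail, h00, h01, h10, h11, h20, h21, h22]

/-- The nonzero elements of the `(-i)`-eigenspace of `τ` form exactly the orbit
of `ε` under `ℝ₊ × SU(2)`. -/
theorem eigenspace_is_orbit :
    ∀ X : Matrix (Fin 3) (Fin 3) ℂ,
      (X.trace = 0 ∧ tauLie X = -(Complex.I • X) ∧ X ≠ 0) ↔
      ∃ r : ℝ, 0 < r ∧ ∃ k ∈ Matrix.unitaryGroup (Fin 2) ℂ, k.det = 1 ∧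
        X = (r : ℂ) • (Qk k * epsMat * (Qk k)⁻¹) := by
  intro X
  constructor
  · rintro ⟨htr, htau, hne⟩
    have hX := eigen_form X htau
    obtain ⟨a, hadef⟩ : ∃ a : ℂ, a = X 0 2 := ⟨_, rfl⟩
    obtain ⟨b, hbdef⟩ : ∃ b : ℂ, b = X 1 2 := ⟨_, rfl⟩
    rw [← hadef, ← hbdef] at hX
    have hab : ¬(a = 0 ∧ b = 0) := by
      rintro ⟨ha, hb⟩
      apply hne
      rw [hX, ha, hb]
      ext i j
      fin_cases i <;> fin_cases j <;> simp [Matrix.vecHead, Matrix.vecTail]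
    obtain ⟨a', hadef'⟩ : ∃ x : ℂ, x = (starRingEnd ℂ) a := ⟨_, rfl⟩
    obtain ⟨b', hbdef'⟩ : ∃ x : ℂ, x = (starRingEnd ℂ) b := ⟨_, rfl⟩
    obtain ⟨N, hNdef⟩ : ∃ N : ℝ, N = Complex.normSq a + Complex.normSq b := ⟨_, rfl⟩
    have hN : 0 < N := by
      rw [hNdef]
      rcases not_and_or.mp hab with h | h
      · have := Complex.normSq_pos.mpr h
        have := Complex.normSq_nonneg b
        positivity
      · have := Complex.normSq_pos.mpr h
        have := Complex.normSq_nonneg a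
        positivity
    obtain ⟨n, hndef⟩ : ∃ n : ℝ, n = Real.sqrt N := ⟨_, rfl⟩
    have hn : 0 < n := by rw [hndef]; exact Real.sqrt_pos.mpr hN
    have hn2 : n * n = N := by rw [hndef]; exact Real.mul_self_sqrt hN.le
    obtain ⟨c, hcdef⟩ : ∃ c : ℝ, c = Real.sqrt 2 / (2 * n) := ⟨_, rfl⟩
    obtain ⟨r, hrdef⟩ : ∃ r : ℝ, r = n * Real.sqrt 2 := ⟨_, rfl⟩
    have h2s : Real.sqrt 2 * Real.sqrt 2 = 2 := Real.mul_self_sqrt (by norm_num)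
    have hs2pos : (0:ℝ) < Real.sqrt 2 := by positivity
    have hr : 0 < r := by rw [hrdef]; positivity
    have hrc : r * c = 1 := by
      rw [hrdef, hcdef]
      field_simp
      linear_combination h2s
    have hc2 : 2 * (c * c) * N = 1 := by
      rw [hcdef, ← hn2]
      field_simp
      linear_combination h2s
    have hrc' : (r : ℂ) * (c : ℂ) = 1 := by
      exact_mod_cast congrArg (Complex.ofReal) hrc
    have hc2' : 2 * ((c:ℂ) * (c:ℂ)) * ((N:ℝ) : ℂ) = 1 := by
      exact_mod_cast congrArg (Complex.ofReal) hc2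
    have hS : a * a' + b * b' = ((N : ℝ) : ℂ) := by
      rw [hadef', hbdef', Complex.mul_conj, Complex.mul_conj, hNdef]
      push_cast
      ring
    obtain ⟨k, hkdef⟩ : ∃ k : Matrix (Fin 2) (Fin 2) ℂ,
        k = !![(c:ℂ) * (a - Complex.I * b'), -((c:ℂ) * (b' - Complex.I * a));
               (c:ℂ) * (b + Complex.I * a'), (c:ℂ) * (a' + Complex.I * b)] := ⟨_, rfl⟩
    have hstark : star k =
        !![(c:ℂ) * (a' + Complex.I * b), (c:ℂ) * (b' - Complex.I * a);
           -((c:ℂ) * (b + Complex.I * a')), (c:ℂ) * (a - Complex.I * b')] := by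
      rw [hkdef]
      ext i j
      fin_cases i <;> fin_cases j <;>
        simp [Matrix.conjTranspose_apply, Matrix.vecHead, Matrix.vecTail,
          hadef', hbdef', Complex.conj_ofReal, Complex.conj_I] <;>
        first
        | ring1
        | (left; first | trivial | ring1)
    have hk1 : k * star k = 1 := by
      rw [hstark, hkdef]
      ext i j
      fin_cases i <;> fin_cases j <;>
        simp [Matrix.mul_apply, Fin.sum_univ_two, Matrix.one_apply,
          Matrix.vecHead, Matrix.vecTail]
      · linear_combination (2*(c:ℂ)*(c:ℂ))*hS + hc2' +
          (-(c:ℂ)*(c:ℂ)*(a*a' + b*b'))*Complex.I_sq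
      · ring
      · ring
      · linear_combination (2*(c:ℂ)*(c:ℂ))*hS + hc2' +
          (-(c:ℂ)*(c:ℂ)*(a*a' + b*b'))*Complex.I_sq
    have hkmem : k ∈ Matrix.unitaryGroup (Fin 2) ℂ := Matrix.mem_unitaryGroup_iff.mpr hk1
    have hkdet : k.det = 1 := by
      rw [Matrix.det_fin_two, hkdef]
      simp [Matrix.vecHead, Matrix.vecTail]
      linear_combination (2*(c:ℂ)*(c:ℂ))*hS + hc2' +
        (-(c:ℂ)*(c:ℂ)*(a*a' + b*b'))*Complex.I_sq
    refine ⟨r, hr, k, hkmem, hkdet, ?_⟩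
    rw [Qk_inv k hk1, hstark, conj_form, hX, hkdef]
    ext i j
    fin_cases i <;> fin_cases j <;>
      simp [Matrix.smul_apply, Matrix.vecHead, Matrix.vecTail]
    · linear_combination (-a)*hrc' + ((r:ℂ)*(c:ℂ)*a/2)*Complex.I_sq
    · linear_combination (-b)*hrc' + ((r:ℂ)*(c:ℂ)*b/2)*Complex.I_sq
    · linear_combination (Complex.I*b)*hrc' + ((r:ℂ)*(c:ℂ)*a'/2)*Complex.I_sq
    · linear_combination (-(Complex.I)*a)*hrc' + ((r:ℂ)*(c:ℂ)*b'/2)*Complex.I_sq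
  · rintro ⟨r, hr, k, hkmem, hkdet, hX⟩
    obtain ⟨h1, h2, h3⟩ := forward r hr k hkmem hkdet
    exact ⟨by rw [hX]; exact h1, by rw [hX]; exact h2, by rw [hX]; exact h3⟩
end
end

section
/- Let τ(X) = -P·Xᵀ·P⁻¹ on sl(3,ℂ) with P = [[0,1,0],[-1,0,0],[0,0,1]], and for a ∈ {0, 2, -1, 1} let π_a : sl(3,ℂ) → sl(3,ℂ) be the projection onto the i^a-eigenspace of τ along the direct sum of the other three eigenspaces. Let U ⊆ ℝ² be open and let A, B : U → sl(3,ℂ) be smooth maps with values in su(3) (skew-Hermitian), satisfying the partial primitivity condition π₋₁(A + iB) = 0 and π₁(A - iB) = 0 pointwise on U. For λ ∈ ℂ with |λ| = 1 define smooth maps A_λ, B_λ : U → sl(3,ℂ) by A_λ = (1/2)λ⁻²(π₂A - i·π₂B) + (1/2)λ²(π₂A + i·π₂B) + λ⁻¹·π₋₁A + λ·π₁A + π₀A and B_λ = (i/2)λ⁻²(π₂A - i·π₂B) - (i/2)λ²(π₂A + i·π₂B) + λ⁻¹·π₋₁B + λ·π₁B + π₀B. Then the following are equivalent: (1) for every λ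 ∈ ℂ with |λ| = 1, the zero-curvature equation ∂B_λ/∂x - ∂A_λ/∂y + [A_λ, B_λ] = 0 holds on U; (2) the zero-curvature equation ∂B/∂x - ∂A/∂y + [A, B] = 0 holds on U and in addition ∂(π₂A)/∂x + ∂(π₂B)/∂y = 0 on U. -/
open Matrix

noncomputable section

attribute [local instance] Matrix.normedAddCommGroup Matrix.normedSpace

abbrev M3 := Matrix (Fin 3) (Fin 3) ℂ

def Qmat : M3 := !![0,-1,0; 1,0,0; 0,0,1]

lemma Pmat_mul_Qmat : Pmat * Qmat = 1 := by
  ext i j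
  fin_cases i <;> fin_cases j <;>
    simp [Pmat, Qmat, Matrix.mul_apply, Fin.sum_univ_three, Matrix.one_apply,
      Matrix.vecHead, Matrix.vecTail]

lemma Qmat_mul_Pmat : Qmat * Pmat = 1 := by
  ext i j
  fin_cases i <;> fin_cases j <;>
    simp [Pmat, Qmat, Matrix.mul_apply, Fin.sum_univ_three, Matrix.one_apply,
      Matrix.vecHead, Matrix.vecTail]

lemma Pmat_inv : Pmat⁻¹ = Qmat := Matrix.inv_eq_right_inv Pmat_mul_Qmat

lemma tauLie_eq (X : M3) : tauLie X = -(Pmat * Xᵀ * Qmat) := by rw [tauLie, Pmat_inv]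

lemma tauLie_add (X Y : M3) : tauLie (X + Y) = tauLie X + tauLie Y := by
  simp only [tauLie, Matrix.transpose_add, Matrix.add_mul, Matrix.mul_add]
  abel

lemma tauLie_smul (c : ℂ) (X : M3) : tauLie (c • X) = c • tauLie X := by
  simp [tauLie, Matrix.transpose_smul, Matrix.smul_mul, Matrix.mul_smul]

lemma tauLie_neg (X : M3) : tauLie (-X) = -tauLie X := by
  simp [tauLie, Matrix.transpose_neg, Matrix.neg_mul, Matrix.mul_neg]

lemma tauLie_sub (X Y : M3) : tauLie (X - Y) = tauLie X - tauLie Y := by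
  simp only [tauLie, Matrix.transpose_sub, Matrix.sub_mul, Matrix.mul_sub]
  abel

lemma tauLie_zero : tauLie (0 : M3) = 0 := by simp [tauLie]

lemma tauLie_mul (X Y : M3) : tauLie X * tauLie Y = -(tauLie (Y * X)) := by
  rw [tauLie_eq, tauLie_eq, tauLie_eq]
  have h : Pmat * Xᵀ * Qmat * (Pmat * Yᵀ * Qmat) = Pmat * Xᵀ * (Qmat * Pmat) * Yᵀ * Qmat := by
    noncomm_ring
  rw [neg_mul_neg, h, Qmat_mul_Pmat, Matrix.transpose_mul]
  noncomm_ring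

lemma tauLie_bracket (X Y : M3) :
    tauLie (X * Y - Y * X) = tauLie X * tauLie Y - tauLie Y * tauLie X := by
  rw [tauLie_sub, tauLie_mul, tauLie_mul]
  abel

lemma I3 : Complex.I ^ 3 = -Complex.I := by rw [pow_succ, Complex.I_sq]; ring
lemma I4 : Complex.I ^ 4 = 1 := by rw [(by norm_num : (4:ℕ) = 2*2), pow_mul, Complex.I_sq]; norm_num

set_option maxHeartbeats 1000000 in
lemma commute02 (X Y : M3) (hX : tauLie X = X) (hY : tauLie Y = -Y) : X * Y = Y * X := by
  rw [tauLie, Pmat_inv] at hX hY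
  have hx : ∀ i j, (-(Pmat * Xᵀ * Qmat)) i j = X i j := fun i j => by rw [hX]
  have hy : ∀ i j, (-(Pmat * Yᵀ * Qmat)) i j = (-Y) i j := fun i j => by rw [hY]
  have e02 := hx 0 2; have e21 := hx 2 1; have e20 := hx 2 0; have e12 := hx 1 2
  have e22 := hx 2 2
  have f01 := hy 0 1; have f10 := hy 1 0; have f00 := hy 0 0
  have f02 := hy 0 2; have f21 := hy 2 1; have f12 := hy 1 2; have f20 := hy 2 0
  simp [Pmat, Qmat, Matrix.mul_apply, Fin.sum_univ_three, Matrix.vecMul, dotProduct,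
    Matrix.vecHead, Matrix.vecTail] at e02 e21 e20 e12 e22 f01 f10 f00 f02 f21 f12 f20
  have hX02 : X 0 2 = 0 := by linear_combination (e21 - e02)/2
  have hX21 : X 2 1 = 0 := by linear_combination -(e02 + e21)/2
  have hX20 : X 2 0 = 0 := by linear_combination (e12 - e20)/2
  have hX12 : X 1 2 = 0 := by linear_combination -(e20 + e12)/2
  have hX22 : X 2 2 = 0 := by linear_combination -e22/2
  have hY01 : Y 0 1 = 0 := by linear_combination f01/2
  have hY10 : Y 1 0 = 0 := by linear_combination f10/2
  have hY02 : Y 0 2 = 0 := by linear_combination (f21 - f02)/2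
  have hY21 : Y 2 1 = 0 := by linear_combination (f21 + f02)/2
  have hY12 : Y 1 2 = 0 := by linear_combination (f12 + f20)/2
  have hY20 : Y 2 0 = 0 := by linear_combination (f12 - f20)/2
  ext i j
  fin_cases i <;> fin_cases j <;>
    simp [Matrix.mul_apply, Fin.sum_univ_three, hX02, hX21, hX20, hX12, hX22,
      hY01, hY10, hY02, hY21, hY12, hY20, f00] <;> ring

def CmatTwo (pi0 pi2 pim pip : Matrix (Fin 3) (Fin 3) ℂ →ₗ[ℂ] Matrix (Fin 3) (Fin 3) ℂ) (a b u1 u2 w1 w2 : Matrix (Fin 3) (Fin 3) ℂ) : M3 :=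
  (-(Complex.I/2)) • (pi2 u1 + Complex.I • pi2 w1) - ((1:ℂ)/2) • (pi2 u2 + Complex.I • pi2 w2)
    + ((1:ℂ)/2) • ((pi2 a + Complex.I • pi2 b) * pi0 b - pi0 b * (pi2 a + Complex.I • pi2 b)) - (Complex.I/2) • (pi0 a * (pi2 a + Complex.I • pi2 b) - (pi2 a + Complex.I • pi2 b) * pi0 a)

def CmatNegTwo (pi0 pi2 pim pip : Matrix (Fin 3) (Fin 3) ℂ →ₗ[ℂ] Matrix (Fin 3) (Fin 3) ℂ) (a b u1 u2 w1 w2 : Matrix (Fin 3) (Fin 3) ℂ) : M3 :=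
  (Complex.I/2) • (pi2 u1 - Complex.I • pi2 w1) - ((1:ℂ)/2) • (pi2 u2 - Complex.I • pi2 w2)
    + ((1:ℂ)/2) • ((pi2 a - Complex.I • pi2 b) * pi0 b - pi0 b * (pi2 a - Complex.I • pi2 b)) + (Complex.I/2) • (pi0 a * (pi2 a - Complex.I • pi2 b) - (pi2 a - Complex.I • pi2 b) * pi0 a)

def CmatOne (pi0 pi2 pim pip : Matrix (Fin 3) (Fin 3) ℂ →ₗ[ℂ] Matrix (Fin 3) (Fin 3) ℂ) (a b u1 u2 w1 w2 : Matrix (Fin 3) (Fin 3) ℂ) : M3 :=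
  pip w1 - pip u2 + ((Complex.I • pip b) * pi0 b - pi0 b * (Complex.I • pip b)) + (pi0 a * pip b - pip b * pi0 a) + ((pi2 a + Complex.I • pi2 b) * pim b - pim b * (pi2 a + Complex.I • pi2 b))

def CmatNegOne (pi0 pi2 pim pip : Matrix (Fin 3) (Fin 3) ℂ →ₗ[ℂ] Matrix (Fin 3) (Fin 3) ℂ) (a b u1 u2 w1 w2 : Matrix (Fin 3) (Fin 3) ℂ) : M3 :=
  pim w1 - pim u2 + ((-(Complex.I • pim b)) * pi0 b - pi0 b * (-(Complex.I • pim b))) + (pi0 a * pim b - pim b * pi0 a) + ((pi2 a - Complex.I • pi2 b) * pip b - pip b * (pi2 a - Complex.I • pi2 b))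

def CmatZero (pi0 pi2 pim pip : Matrix (Fin 3) (Fin 3) ℂ →ₗ[ℂ] Matrix (Fin 3) (Fin 3) ℂ) (a b u1 u2 w1 w2 : Matrix (Fin 3) (Fin 3) ℂ) : M3 :=
  pi0 w1 - pi0 u2 + (pi0 a * pi0 b - pi0 b * pi0 a) + (pi2 a * pi2 b - pi2 b * pi2 a)
    + ((-(Complex.I • pim b)) * pip b - pip b * (-(Complex.I • pim b))) + ((Complex.I • pip b) * pim b - pim b * (Complex.I • pip b))


lemma tau_br_smul (X Y : M3) (cx cy : ℂ) (hX : tauLie X = cx • X) (hY : tauLie Y = cy • Y) :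
    tauLie (X * Y - Y * X) = (cx * cy) • (X * Y - Y * X) := by
  rw [tauLie_bracket, hX, hY]
  simp only [smul_mul_assoc, mul_smul_comm, smul_smul, smul_sub]
  match_scalars <;> ring

section algebra
variable (pi0 pi2 pim pip : Matrix (Fin 3) (Fin 3) ℂ →ₗ[ℂ] Matrix (Fin 3) (Fin 3) ℂ) (a b u1 u2 w1 w2 : Matrix (Fin 3) (Fin 3) ℂ)

lemma L_R3 (h0 : ∀ X, tauLie (pi0 X) = pi0 X) (h2 : ∀ X, tauLie (pi2 X) = -(pi2 X)) :
    Complex.I • (CmatTwo pi0 pi2 pim pip a b u1 u2 w1 w2 - CmatNegTwo pi0 pi2 pim pip a b u1 u2 w1 w2)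
      = pi2 u1 + pi2 w2 := by
  have e1 : pi0 a * pi2 a = pi2 a * pi0 a := commute02 _ _ (h0 a) (h2 a)
  have e2 : pi0 b * pi2 b = pi2 b * pi0 b := commute02 _ _ (h0 b) (h2 b)
  have e3 : pi0 a * pi2 b = pi2 b * pi0 a := commute02 _ _ (h0 a) (h2 b)
  have e4 : pi0 b * pi2 a = pi2 a * pi0 b := commute02 _ _ (h0 b) (h2 a)
  simp only [CmatTwo, CmatNegTwo, mul_add, add_mul, sub_mul, mul_sub, smul_mul_assoc,
    mul_smul_comm, smul_add, smul_sub, smul_smul, neg_mul, mul_neg, smul_neg, neg_smul,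
    neg_neg, e1, e2, e3, e4]
  all_goals match_scalars <;> ((try field_simp); (try ring_nf); (try simp only [Complex.I_sq, I3, I4]); (try field_simp); (try ring_nf); (try ring))

lemma L_mem0 (h0 : ∀ X, tauLie (pi0 X) = pi0 X) (h2 : ∀ X, tauLie (pi2 X) = -(pi2 X)) (hm : ∀ X, tauLie (pim X) = -(Complex.I • pim X)) (hp : ∀ X, tauLie (pip X) = Complex.I • pip X) :
    tauLie (CmatZero pi0 pi2 pim pip a b u1 u2 w1 w2) = CmatZero pi0 pi2 pim pip a b u1 u2 w1 w2 := by
  have hAmE : tauLie (-(Complex.I • pim b)) = (-Complex.I) • (-(Complex.I • pim b)) := by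
    rw [tauLie_neg, tauLie_smul, hm]
    try match_scalars <;> ring
  have hApE : tauLie (Complex.I • pip b) = Complex.I • (Complex.I • pip b) := by
    rw [tauLie_smul, hp]
    try match_scalars <;> ring
  have h0E : ∀ X, tauLie (pi0 X) = (1:ℂ) • pi0 X := by intro X; rw [h0, one_smul]
  have h2E : ∀ X, tauLie (pi2 X) = (-1:ℂ) • pi2 X := by intro X; rw [h2, neg_smul, one_smul]
  have t1 := tau_br_smul (pi0 a) (pi0 b) 1 1 (h0E a) (h0E b)
  have t2 := tau_br_smul (pi2 a) (pi2 b) (-1) (-1) (h2E a) (h2E b)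
  have t3 := tau_br_smul (-(Complex.I • pim b)) (pip b) (-Complex.I) Complex.I hAmE (hp b)
  have t4 := tau_br_smul (Complex.I • pip b) (pim b) Complex.I (-Complex.I) hApE (by rw [hm, neg_smul])
  simp only [CmatZero]
  rw [tauLie_add, tauLie_add, tauLie_add, tauLie_add, tauLie_sub, t1, t2, t3, t4, h0, h0]
  all_goals match_scalars <;> ((try field_simp); (try ring_nf); (try simp only [Complex.I_sq, I3, I4]); (try field_simp); (try ring_nf); (try ring))

lemma L_mem1 (h0 : ∀ X, tauLie (pi0 X) = pi0 X) (h2 : ∀ X, tauLie (pi2 X) = -(pi2 X)) (hm : ∀ X, tauLie (pim X) = -(Complex.I • pim X)) (hp : ∀ X, tauLie (pip X) = Complex.I • pip X) :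
    tauLie (CmatOne pi0 pi2 pim pip a b u1 u2 w1 w2) = Complex.I • CmatOne pi0 pi2 pim pip a b u1 u2 w1 w2 := by
  have hApE : tauLie (Complex.I • pip b) = Complex.I • (Complex.I • pip b) := by
    rw [tauLie_smul, hp]; try match_scalars <;> ring
  have hdE : tauLie (pi2 a + Complex.I • pi2 b) = (-1:ℂ) • (pi2 a + Complex.I • pi2 b) := by
    rw [tauLie_add, tauLie_smul, h2, h2]; try match_scalars <;> ring
  have h0E : ∀ X, tauLie (pi0 X) = (1:ℂ) • pi0 X := by intro X; rw [h0, one_smul]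
  have t1 := tau_br_smul (Complex.I • pip b) (pi0 b) Complex.I 1 hApE (h0E b)
  have t2 := tau_br_smul (pi0 a) (pip b) 1 Complex.I (h0E a) (hp b)
  have t3 := tau_br_smul (pi2 a + Complex.I • pi2 b) (pim b) (-1) (-Complex.I) hdE (by rw [hm, neg_smul])
  simp only [CmatOne]
  rw [tauLie_add, tauLie_add, tauLie_add, tauLie_sub, t1, t2, t3, hp, hp]
  all_goals match_scalars <;> ((try field_simp); (try ring_nf); (try simp only [Complex.I_sq, I3, I4]); (try field_simp); (try ring_nf); (try ring))

lemma L_memm1 (h0 : ∀ X, tauLie (pi0 X) = pi0 X) (h2 : ∀ X, tauLie (pi2 X) = -(pi2 X)) (hm : ∀ X, tauLie (pim X) = -(Complex.I • pim X)) (hp : ∀ X, tauLie (pip X) = Complex.I • pip X) :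
    tauLie (CmatNegOne pi0 pi2 pim pip a b u1 u2 w1 w2) = -(Complex.I • CmatNegOne pi0 pi2 pim pip a b u1 u2 w1 w2) := by
  have hAmE : tauLie (-(Complex.I • pim b)) = (-Complex.I) • (-(Complex.I • pim b)) := by
    rw [tauLie_neg, tauLie_smul, hm]; try match_scalars <;> ring
  have hcE : tauLie (pi2 a - Complex.I • pi2 b) = (-1:ℂ) • (pi2 a - Complex.I • pi2 b) := by
    rw [tauLie_sub, tauLie_smul, h2, h2]; try match_scalars <;> ring
  have h0E : ∀ X, tauLie (pi0 X) = (1:ℂ) • pi0 X := by intro X; rw [h0, one_smul]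
  have t1 := tau_br_smul (-(Complex.I • pim b)) (pi0 b) (-Complex.I) 1 hAmE (h0E b)
  have t2 := tau_br_smul (pi0 a) (pim b) 1 (-Complex.I) (h0E a) (by rw [hm, neg_smul])
  have t3 := tau_br_smul (pi2 a - Complex.I • pi2 b) (pip b) (-1) Complex.I hcE (hp b)
  simp only [CmatNegOne]
  rw [tauLie_add, tauLie_add, tauLie_add, tauLie_sub, t1, t2, t3, hm, hm]
  all_goals match_scalars <;> ((try field_simp); (try ring_nf); (try simp only [Complex.I_sq, I3, I4]); (try field_simp); (try ring_nf); (try ring))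

lemma L_mem2 (h0 : ∀ X, tauLie (pi0 X) = pi0 X) (h2 : ∀ X, tauLie (pi2 X) = -(pi2 X)) (hm : ∀ X, tauLie (pim X) = -(Complex.I • pim X)) (hp : ∀ X, tauLie (pip X) = Complex.I • pip X) :
    tauLie (CmatTwo pi0 pi2 pim pip a b u1 u2 w1 w2 + CmatNegTwo pi0 pi2 pim pip a b u1 u2 w1 w2)
      = -(CmatTwo pi0 pi2 pim pip a b u1 u2 w1 w2 + CmatNegTwo pi0 pi2 pim pip a b u1 u2 w1 w2) := by
  have h0E : ∀ X, tauLie (pi0 X) = (1:ℂ) • pi0 X := by intro X; rw [h0, one_smul]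
  have hdE : tauLie (pi2 a + Complex.I • pi2 b) = (-1:ℂ) • (pi2 a + Complex.I • pi2 b) := by
    rw [tauLie_add, tauLie_smul, h2, h2]; try match_scalars <;> ring
  have hcE : tauLie (pi2 a - Complex.I • pi2 b) = (-1:ℂ) • (pi2 a - Complex.I • pi2 b) := by
    rw [tauLie_sub, tauLie_smul, h2, h2]; try match_scalars <;> ring
  have hdu1 : tauLie (pi2 u1 + Complex.I • pi2 w1) = (-1:ℂ) • (pi2 u1 + Complex.I • pi2 w1) := by
    rw [tauLie_add, tauLie_smul, h2, h2]; try match_scalars <;> ring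
  have hdu2 : tauLie (pi2 u2 + Complex.I • pi2 w2) = (-1:ℂ) • (pi2 u2 + Complex.I • pi2 w2) := by
    rw [tauLie_add, tauLie_smul, h2, h2]; try match_scalars <;> ring
  have hcu1 : tauLie (pi2 u1 - Complex.I • pi2 w1) = (-1:ℂ) • (pi2 u1 - Complex.I • pi2 w1) := by
    rw [tauLie_sub, tauLie_smul, h2, h2]; try match_scalars <;> ring
  have hcu2 : tauLie (pi2 u2 - Complex.I • pi2 w2) = (-1:ℂ) • (pi2 u2 - Complex.I • pi2 w2) := by
    rw [tauLie_sub, tauLie_smul, h2, h2]; try match_scalars <;> ring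
  have t1 := tau_br_smul (pi2 a + Complex.I • pi2 b) (pi0 b) (-1) 1 hdE (h0E b)
  have t2 := tau_br_smul (pi0 a) (pi2 a + Complex.I • pi2 b) 1 (-1) (h0E a) hdE
  have t3 := tau_br_smul (pi2 a - Complex.I • pi2 b) (pi0 b) (-1) 1 hcE (h0E b)
  have t4 := tau_br_smul (pi0 a) (pi2 a - Complex.I • pi2 b) 1 (-1) (h0E a) hcE
  simp only [CmatTwo, CmatNegTwo]
  rw [tauLie_add]
  rw [tauLie_sub, tauLie_add, tauLie_sub]
  rw [tauLie_smul, hdu1]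
  rw [tauLie_smul, hdu2]
  rw [tauLie_smul, t1]
  rw [tauLie_smul, t2]
  rw [tauLie_add, tauLie_add, tauLie_sub]
  rw [tauLie_smul, hcu1]
  rw [tauLie_smul, hcu2]
  rw [tauLie_smul, t3]
  rw [tauLie_smul, t4]
  all_goals match_scalars <;> ((try field_simp); (try ring_nf); (try simp only [Complex.I_sq, I3, I4]); (try field_simp); (try ring_nf); (try ring))

end algebra

open Complex in

lemma eigen_unique (v0 v1 v2 v3 : M3)
    (h0 : tauLie v0 = v0) (h1 : tauLie v1 = Complex.I • v1)
    (h2 : tauLie v2 = -v2) (h3 : tauLie v3 = -(Complex.I • v3))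
    (hs : v0 + v1 + v2 + v3 = 0) :
    v0 = 0 ∧ v1 = 0 ∧ v2 = 0 ∧ v3 = 0 := by
  have e1 : v0 + I • v1 + -v2 + -(I • v3) = 0 := by
    have := congrArg tauLie hs
    simpa only [tauLie_add, h0, h1, h2, h3, tauLie_zero] using this
  have e2 : v0 + -v1 + v2 + -v3 = 0 := by
    have := congrArg tauLie e1
    simpa only [tauLie_add, tauLie_neg, tauLie_smul, h0, h1, h2, h3, tauLie_zero,
      smul_smul, Complex.I_mul_I, neg_smul, one_smul, neg_neg, smul_neg] using this
  have e3 : v0 + -(I • v1) + -v2 + I • v3 = 0 := by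
    have := congrArg tauLie e2
    simpa only [tauLie_add, tauLie_neg, tauLie_smul, h0, h1, h2, h3, tauLie_zero,
      smul_smul, Complex.I_mul_I, neg_smul, one_smul, neg_neg, smul_neg] using this
  have k0 : v0 = 0 := by
    have h4 : (4:ℂ) • v0 = 0 := by
      have : (4:ℂ) • v0 = (v0 + v1 + v2 + v3) + (v0 + I • v1 + -v2 + -(I • v3))
          + (v0 + -v1 + v2 + -v3) + (v0 + -(I • v1) + -v2 + I • v3) := by module
      rw [this, hs, e1, e2, e3]; simp
    simpa using smul_eq_zero.mp h4
  have k2 : v2 = 0 := by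
    have h4 : (4:ℂ) • v2 = 0 := by
      have : (4:ℂ) • v2 = (v0 + v1 + v2 + v3) - (v0 + I • v1 + -v2 + -(I • v3))
          + (v0 + -v1 + v2 + -v3) - (v0 + -(I • v1) + -v2 + I • v3) := by module
      rw [this, hs, e1, e2, e3]; simp
    simpa using smul_eq_zero.mp h4
  have k1 : v1 = 0 := by
    have h4 : (4:ℂ) • v1 = 0 := by
      have : (4:ℂ) • v1 = (v0 + v1 + v2 + v3) + (-I) • (v0 + I • v1 + -v2 + -(I • v3))
          - (v0 + -v1 + v2 + -v3) + I • (v0 + -(I • v1) + -v2 + I • v3) := by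
        match_scalars <;> simp [Complex.I_mul_I] <;> ring_nf <;>
          simp [Complex.I_sq] <;> ring
      rw [this, hs, e1, e2, e3]; simp
    simpa using smul_eq_zero.mp h4
  have k3 : v3 = 0 := by
    have h4 : (4:ℂ) • v3 = 0 := by
      have : (4:ℂ) • v3 = (v0 + v1 + v2 + v3) + I • (v0 + I • v1 + -v2 + -(I • v3))
          - (v0 + -v1 + v2 + -v3) + (-I) • (v0 + -(I • v1) + -v2 + I • v3) := by
        match_scalars <;> simp [Complex.I_mul_I] <;> ring_nf <;>
          simp [Complex.I_sq] <;> ring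
      rw [this, hs, e1, e2, e3]; simp
    simpa using smul_eq_zero.mp h4
  exact ⟨k0, k1, k2, k3⟩



def toCLM (f : M3 →ₗ[ℂ] M3) : M3 →L[ℝ] M3 :=
  LinearMap.toContinuousLinearMap (f.restrictScalars ℝ)

lemma toCLM_apply (f : M3 →ₗ[ℂ] M3) (x : M3) : toCLM f x = f x := rfl

lemma hasFDerivAt_pi_comp (f : M3 →ₗ[ℂ] M3) (g : ℝ × ℝ → M3) (p : ℝ × ℝ)
    (hg : DifferentiableAt ℝ g p) :
    HasFDerivAt (fun q => f (g q)) ((toCLM f).comp (fderiv ℝ g p)) p :=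
  (toCLM f).hasFDerivAt.comp p hg.hasFDerivAt

lemma fderiv_pi_comp (f : M3 →ₗ[ℂ] M3) (g : ℝ × ℝ → M3) (p : ℝ × ℝ)
    (hg : DifferentiableAt ℝ g p) (v : ℝ × ℝ) :
    fderiv ℝ (fun q => f (g q)) p v = f (fderiv ℝ g p v) := by
  rw [(hasFDerivAt_pi_comp f g p hg).fderiv]
  rfl

set_option maxHeartbeats 1000000 in
lemma fderiv_MC (pi0 pi2 pim pip : M3 →ₗ[ℂ] M3) (f g h : ℝ × ℝ → M3) (p : ℝ × ℝ)
    (hf : DifferentiableAt ℝ f p) (hg : DifferentiableAt ℝ g p)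
    (hh : DifferentiableAt ℝ h p) (c1 c2 c3 c4 : ℂ) (F : ℝ × ℝ → M3)
    (hF : F = fun q => c1 • (pi2 (f q) - Complex.I • pi2 (g q))
      + c2 • (pi2 (f q) + Complex.I • pi2 (g q))
      + c3 • pim (h q) + c4 • pip (h q) + pi0 (h q)) (v : ℝ × ℝ) :
    fderiv ℝ F p v = c1 • (pi2 (fderiv ℝ f p v) - Complex.I • pi2 (fderiv ℝ g p v))
      + c2 • (pi2 (fderiv ℝ f p v) + Complex.I • pi2 (fderiv ℝ g p v))
      + c3 • pim (fderiv ℝ h p v) + c4 • pip (fderiv ℝ h p v) + pi0 (fderiv ℝ h p v) := by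
  subst hF
  have k2f := hasFDerivAt_pi_comp pi2 f p hf
  have k2g := hasFDerivAt_pi_comp pi2 g p hg
  have kmh := hasFDerivAt_pi_comp pim h p hh
  have kph := hasFDerivAt_pi_comp pip h p hh
  have k0h := hasFDerivAt_pi_comp pi0 h p hh
  have big := (((((k2f.sub (k2g.const_smul Complex.I)).const_smul c1).add
      ((k2f.add (k2g.const_smul Complex.I)).const_smul c2)).add
      (kmh.const_smul c3)).add (kph.const_smul c4)).add k0h
  have big' : HasFDerivAt (fun q => c1 • (pi2 (f q) - Complex.I • pi2 (g q))
      + c2 • (pi2 (f q) + Complex.I • pi2 (g q))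
      + c3 • pim (h q) + c4 • pip (h q) + pi0 (h q)) _ p := big
  rw [big'.fderiv]
  rfl


set_option maxHeartbeats 0 in
lemma L_main (pi0 pi2 pim pip : Matrix (Fin 3) (Fin 3) ℂ →ₗ[ℂ] Matrix (Fin 3) (Fin 3) ℂ) (a b u1 u2 w1 w2 : Matrix (Fin 3) (Fin 3) ℂ) (l : ℂ) (hl : l ≠ 0)
    (hAm : pim a = -(Complex.I • pim b)) (hAp : pip a = Complex.I • pip b) :
    ((Complex.I / 2 * (l⁻¹) ^ 2) • (pi2 u1 - Complex.I • pi2 w1) - (Complex.I / 2 * l ^ 2) • (pi2 u1 + Complex.I • pi2 w1) + l⁻¹ • pim w1 + l • pip w1 + pi0 w1) - (((1:ℂ) / 2 * (l⁻¹) ^ 2) • (pi2 u2 - Complex.I • pi2 w2) + ((1:ℂ) / 2 * l ^ 2) • (pi2 u2 + Complex.I • pi2 w2) + l⁻¹ • pim u2 + l • pip u2 + pi0 u2) + ((((1:ℂ) / 2 * (l⁻¹) ^ 2) • (pi2 a - Complex.I • pi2 b) + ((1:ℂ) / 2 * l ^ 2) • (pi2 a + Complex.I • pi2 b) + l⁻¹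 • pim a + l • pip a + pi0 a) * ((Complex.I / 2 * (l⁻¹) ^ 2) • (pi2 a - Complex.I • pi2 b) - (Complex.I / 2 * l ^ 2) • (pi2 a + Complex.I • pi2 b) + l⁻¹ • pim b + l • pip b + pi0 b) - ((Complex.I / 2 * (l⁻¹) ^ 2) • (pi2 a - Complex.I • pi2 b) - (Complex.I / 2 * l ^ 2) • (pi2 a + Complex.I • pi2 b) + l⁻¹ • pim b + l • pip b + pi0 b) * (((1:ℂ) / 2 * (l⁻¹) ^ 2) • (pi2 a - Complex.I • pi2 b) + ((1:ℂ) / 2 * l ^ 2) • (pi2 a + Complex.I • pi2 b) + l⁻¹ • pim a + l • pip a + pi0 a))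
    = ((l⁻¹)^2) • CmatNegTwo pi0 pi2 pim pip a b u1 u2 w1 w2
      + l⁻¹ • CmatNegOne pi0 pi2 pim pip a b u1 u2 w1 w2
      + CmatZero pi0 pi2 pim pip a b u1 u2 w1 w2
      + l • CmatOne pi0 pi2 pim pip a b u1 u2 w1 w2
      + (l^2) • CmatTwo pi0 pi2 pim pip a b u1 u2 w1 w2 := by
  rw [hAm, hAp]
  simp only [CmatTwo, CmatNegTwo, CmatOne, CmatNegOne, CmatZero,
    mul_add, add_mul, sub_mul, mul_sub, smul_mul_assoc, mul_smul_comm,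
    smul_add, smul_sub, smul_smul, neg_mul, mul_neg, smul_neg, neg_smul, neg_neg]
  match_scalars
  any_goals ((try field_simp); (try ring_nf); (try simp only [Complex.I_sq, I3, I4]); (try field_simp); (try ring_nf); (try ring))


def zc : ℂ := (3 + 4*Complex.I)/5

lemma zc_inv : zc⁻¹ = (3 - 4*Complex.I)/5 := by
  have h : zc * ((3 - 4*Complex.I)/5) = 1 := by
    rw [zc]
    linear_combination (-16/25 : ℂ) * Complex.I_sq
  exact inv_eq_of_mul_eq_one_right h

lemma zc_abs : ‖zc‖ = 1 := by
  have h1 : Complex.normSq zc = 1 := by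
    rw [zc]
    simp only [Complex.normSq_apply]
    simp [Complex.add_re, Complex.add_im, Complex.mul_re, Complex.mul_im,
      Complex.I_re, Complex.I_im, Complex.div_re, Complex.div_im, Complex.normSq_apply]
    norm_num
  rw [Complex.norm_def, h1, Real.sqrt_one]

lemma zc_ne : zc ≠ 0 := by
  intro h
  have := zc_abs
  rw [h] at this
  simp at this

lemma zc_key : (zc⁻¹)^2 - zc^2 ≠ 0 := by
  have h1 : (zc⁻¹)^2 - zc^2 = -(48/25)*Complex.I := by
    rw [zc_inv, zc]; ring
  intro hcon
  rw [h1] at hcon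
  have := congrArg Complex.im hcon
  simp at this


/-- The zero-curvature equation for the extended Maurer-Cartan form
`α_λ = λ⁻²α₂' + λ⁻¹α₋₁ + α₀ + λα₁ + λ²α₂''` holds for all `|λ| = 1` iff the
Maurer-Cartan form `A dx + B dy` is flat and the `g₂`-component is coclosed. -/
theorem hamiltonian_stationary_loop_characterization
    -- the eigenspace projections of τ on sl(3,ℂ)
    (pi0 pi2 pim pip : Matrix (Fin 3) (Fin 3) ℂ →ₗ[ℂ] Matrix (Fin 3) (Fin 3) ℂ)
    (hsum : ∀ X : Matrix (Fin 3) (Fin 3) ℂ, X.trace = 0 →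
      pi0 X + pi2 X + pim X + pip X = X)
    (h0 : ∀ X, tauLie (pi0 X) = pi0 X)
    (h2 : ∀ X, tauLie (pi2 X) = -(pi2 X))
    (hm : ∀ X, tauLie (pim X) = -(Complex.I • pim X))
    (hp : ∀ X, tauLie (pip X) = Complex.I • pip X)
    -- U open, A, B smooth with values in su(3)
    (U : Set (ℝ × ℝ)) (hU : IsOpen U)
    (A B : ℝ × ℝ → Matrix (Fin 3) (Fin 3) ℂ)
    (hA : ContDiffOn ℝ (⊤ : ℕ∞) A U) (hB : ContDiffOn ℝ (⊤ : ℕ∞) B U)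
    (hAsu : ∀ p ∈ U, (A p).trace = 0 ∧ (A p)ᴴ = -A p)
    (hBsu : ∀ p ∈ U, (B p).trace = 0 ∧ (B p)ᴴ = -B p)
    -- partial primitivity
    (hprim1 : ∀ p ∈ U, pim (A p + Complex.I • B p) = 0)
    (hprim2 : ∀ p ∈ U, pip (A p - Complex.I • B p) = 0)
    -- the extended Maurer-Cartan coefficients A_λ, B_λ
    (Al Bl : ℂ → (ℝ × ℝ) → Matrix (Fin 3) (Fin 3) ℂ)
    (hAl : ∀ l p, Al l p =
      ((1 : ℂ) / 2 * (l⁻¹) ^ 2) • (pi2 (A p) - Complex.I • pi2 (B p))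
        + ((1 : ℂ) / 2 * l ^ 2) • (pi2 (A p) + Complex.I • pi2 (B p))
        + l⁻¹ • pim (A p) + l • pip (A p) + pi0 (A p))
    (hBl : ∀ l p, Bl l p =
      (Complex.I / 2 * (l⁻¹) ^ 2) • (pi2 (A p) - Complex.I • pi2 (B p))
        - (Complex.I / 2 * l ^ 2) • (pi2 (A p) + Complex.I • pi2 (B p))
        + l⁻¹ • pim (B p) + l • pip (B p) + pi0 (B p)) :
    -- (1) ↔ (2)
    ((∀ l : ℂ, ‖l‖ = 1 → ∀ p ∈ U,
        fderiv ℝ (Bl l) p (1, 0) - fderiv ℝ (Al l) p (0, 1)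
          + (Al l p * Bl l p - Bl l p * Al l p) = 0) ↔
      ((∀ p ∈ U,
          fderiv ℝ B p (1, 0) - fderiv ℝ A p (0, 1)
            + (A p * B p - B p * A p) = 0) ∧
        (∀ p ∈ U,
          fderiv ℝ (fun q => pi2 (A q)) p (1, 0)
            + fderiv ℝ (fun q => pi2 (B q)) p (0, 1) = 0))) := by
  have hdA : ∀ p ∈ U, DifferentiableAt ℝ A p := fun p hpU =>
    (hA.differentiableOn (by simp)).differentiableAt (hU.mem_nhds hpU)
  have hdB : ∀ p ∈ U, DifferentiableAt ℝ B p := fun p hpU =>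
    (hB.differentiableOn (by simp)).differentiableAt (hU.mem_nhds hpU)
  have hprimm : ∀ p ∈ U, pim (A p) = -(Complex.I • pim (B p)) := by
    intro p hpU
    have h := hprim1 p hpU
    rw [map_add, LinearMap.map_smul] at h
    exact eq_neg_of_add_eq_zero_left h
  have hprimp : ∀ p ∈ U, pip (A p) = Complex.I • pip (B p) := by
    intro p hpU
    have h := hprim2 p hpU
    rw [map_sub, LinearMap.map_smul] at h
    exact sub_eq_zero.mp h
  have hdAl : ∀ (l : ℂ) (p : ℝ × ℝ), p ∈ U → ∀ v, fderiv ℝ (Al l) p v =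
      ((1 : ℂ) / 2 * (l⁻¹) ^ 2) • (pi2 (fderiv ℝ A p v) - Complex.I • pi2 (fderiv ℝ B p v))
        + ((1 : ℂ) / 2 * l ^ 2) • (pi2 (fderiv ℝ A p v) + Complex.I • pi2 (fderiv ℝ B p v))
        + l⁻¹ • pim (fderiv ℝ A p v) + l • pip (fderiv ℝ A p v) + pi0 (fderiv ℝ A p v) := by
    intro l p hpU v
    exact fderiv_MC pi0 pi2 pim pip A B A p (hdA p hpU) (hdB p hpU) (hdA p hpU)
      _ _ _ _ (Al l) (funext (hAl l)) v
  have hdBl : ∀ (l : ℂ) (p : ℝ × ℝ), p ∈ U → ∀ v, fderiv ℝ (Bl l) p v =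
      (Complex.I / 2 * (l⁻¹) ^ 2) • (pi2 (fderiv ℝ A p v) - Complex.I • pi2 (fderiv ℝ B p v))
        + (-(Complex.I / 2 * l ^ 2)) • (pi2 (fderiv ℝ A p v) + Complex.I • pi2 (fderiv ℝ B p v))
        + l⁻¹ • pim (fderiv ℝ B p v) + l • pip (fderiv ℝ B p v) + pi0 (fderiv ℝ B p v) := by
    intro l p hpU v
    refine fderiv_MC pi0 pi2 pim pip A B B p (hdA p hpU) (hdB p hpU) (hdB p hpU)
      _ _ _ _ (Bl l) ?_ v
    funext q
    rw [hBl l q]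
    module
  have hcurv : ∀ (l : ℂ), l ≠ 0 → ∀ p ∈ U,
      fderiv ℝ (Bl l) p (1, 0) - fderiv ℝ (Al l) p (0, 1)
        + (Al l p * Bl l p - Bl l p * Al l p)
      = ((l⁻¹)^2) • CmatNegTwo pi0 pi2 pim pip (A p) (B p) (fderiv ℝ A p (1,0)) (fderiv ℝ A p (0,1)) (fderiv ℝ B p (1,0)) (fderiv ℝ B p (0,1))
        + l⁻¹ • CmatNegOne pi0 pi2 pim pip (A p) (B p) (fderiv ℝ A p (1,0)) (fderiv ℝ A p (0,1)) (fderiv ℝ B p (1,0)) (fderiv ℝ B p (0,1))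
        + CmatZero pi0 pi2 pim pip (A p) (B p) (fderiv ℝ A p (1,0)) (fderiv ℝ A p (0,1)) (fderiv ℝ B p (1,0)) (fderiv ℝ B p (0,1))
        + l • CmatOne pi0 pi2 pim pip (A p) (B p) (fderiv ℝ A p (1,0)) (fderiv ℝ A p (0,1)) (fderiv ℝ B p (1,0)) (fderiv ℝ B p (0,1))
        + (l^2) • CmatTwo pi0 pi2 pim pip (A p) (B p) (fderiv ℝ A p (1,0)) (fderiv ℝ A p (0,1)) (fderiv ℝ B p (1,0)) (fderiv ℝ B p (0,1)) := by
    intro l hl p hpU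
    have LM := L_main pi0 pi2 pim pip (A p) (B p) (fderiv ℝ A p (1,0)) (fderiv ℝ A p (0,1))
      (fderiv ℝ B p (1,0)) (fderiv ℝ B p (0,1)) l hl (hprimm p hpU) (hprimp p hpU)
    rw [hdBl l p hpU (1,0), hdAl l p hpU (0,1), hAl l p, hBl l p]
    rw [← LM]
    module
  have hAl1 : Set.EqOn (Al 1) A U := by
    intro q hq
    have hs := hsum (A q) (hAsu q hq).1
    rw [hAl 1 q]
    conv_rhs => rw [← hs]
    match_scalars <;> ((try field_simp); (try ring_nf); (try simp only [Complex.I_sq, I3, I4]); (try field_simp); (try ring_nf); (try ring))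
  have hBl1 : Set.EqOn (Bl 1) B U := by
    intro q hq
    have hs := hsum (B q) (hBsu q hq).1
    rw [hBl 1 q]
    conv_rhs => rw [← hs]
    match_scalars <;> ((try field_simp); (try ring_nf); (try simp only [Complex.I_sq, I3, I4]); (try field_simp); (try ring_nf); (try ring))
  have hflat1 : ∀ p ∈ U,
      fderiv ℝ (Bl 1) p (1, 0) - fderiv ℝ (Al 1) p (0, 1)
        + (Al 1 p * Bl 1 p - Bl 1 p * Al 1 p)
      = fderiv ℝ B p (1, 0) - fderiv ℝ A p (0, 1) + (A p * B p - B p * A p) := by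
    intro p hpU
    have e1 : Al 1 =ᶠ[nhds p] A := Filter.eventuallyEq_of_mem (hU.mem_nhds hpU) hAl1
    have e2 : Bl 1 =ᶠ[nhds p] B := Filter.eventuallyEq_of_mem (hU.mem_nhds hpU) hBl1
    rw [e1.fderiv_eq, e2.fderiv_eq, hAl1 hpU, hBl1 hpU]
  constructor
  · intro h1
    have flat : ∀ p ∈ U, fderiv ℝ B p (1, 0) - fderiv ℝ A p (0, 1)
        + (A p * B p - B p * A p) = 0 := by
      intro p hpU
      have h := h1 1 (by simp) p hpU
      rwa [hflat1 p hpU] at h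
    refine ⟨flat, ?_⟩
    intro p hpU
    have hs1 := h1 1 (by simp) p hpU
    rw [hcurv 1 one_ne_zero p hpU] at hs1
    have hsum0 : CmatZero pi0 pi2 pim pip (A p) (B p) (fderiv ℝ A p (1,0)) (fderiv ℝ A p (0,1)) (fderiv ℝ B p (1,0)) (fderiv ℝ B p (0,1)) + CmatOne pi0 pi2 pim pip (A p) (B p) (fderiv ℝ A p (1,0)) (fderiv ℝ A p (0,1)) (fderiv ℝ B p (1,0)) (fderiv ℝ B p (0,1)) + (CmatTwo pi0 pi2 pim pip (A p) (B p) (fderiv ℝ A p (1,0)) (fderiv ℝ A p (0,1)) (fderiv ℝ B p (1,0)) (fderiv ℝ B p (0,1)) + CmatNegTwo pi0 pi2 pim pip (A p) (B p) (fderiv ℝ A p (1,0)) (fderiv ℝ A p (0,1)) (fderiv ℝ B p (1,0)) (fderiv ℝ B p (0,1))) + CmatNegOne pi0 pi2 pim pip (A p) (B p) (fderiv ℝ A p (1,0)) (fderiv ℝ A p (0,1)) (fderiv ℝ B p (1,0)) (fderiv ℝ B p (0,1)) = 0 := by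
      rw [← hs1]
      module
    obtain ⟨k0, k1, k2, k3⟩ := eigen_unique _ _ _ _
      (L_mem0 _ _ _ _ _ _ _ _ _ _ h0 h2 hm hp) (L_mem1 _ _ _ _ _ _ _ _ _ _ h0 h2 hm hp)
      (L_mem2 _ _ _ _ _ _ _ _ _ _ h0 h2 hm hp) (L_memm1 _ _ _ _ _ _ _ _ _ _ h0 h2 hm hp) hsum0
    have hz := h1 zc zc_abs p hpU
    rw [hcurv zc zc_ne p hpU] at hz
    rw [k0, k1, k3] at hz
    have hC2 : CmatTwo pi0 pi2 pim pip (A p) (B p) (fderiv ℝ A p (1,0)) (fderiv ℝ A p (0,1)) (fderiv ℝ B p (1,0)) (fderiv ℝ B p (0,1)) = -(CmatNegTwo pi0 pi2 pim pip (A p) (B p) (fderiv ℝ A p (1,0)) (fderiv ℝ A p (0,1)) (fderiv ℝ B p (1,0)) (fderiv ℝ B p (0,1))) := eq_neg_of_add_eq_zero_left k2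
    rw [hC2] at hz
    have hm2 : ((zc⁻¹)^2 - zc^2) • (CmatNegTwo pi0 pi2 pim pip (A p) (B p) (fderiv ℝ A p (1,0)) (fderiv ℝ A p (0,1)) (fderiv ℝ B p (1,0)) (fderiv ℝ B p (0,1))) = 0 := by
      rw [← hz]
      module
    have hNeg2 : CmatNegTwo pi0 pi2 pim pip (A p) (B p) (fderiv ℝ A p (1,0)) (fderiv ℝ A p (0,1)) (fderiv ℝ B p (1,0)) (fderiv ℝ B p (0,1)) = 0 := by
      rcases smul_eq_zero.mp hm2 with h' | h'
      · exact absurd h' zc_key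
      · exact h'
    have hTwo : CmatTwo pi0 pi2 pim pip (A p) (B p) (fderiv ℝ A p (1,0)) (fderiv ℝ A p (0,1)) (fderiv ℝ B p (1,0)) (fderiv ℝ B p (0,1)) = 0 := by rw [hC2, hNeg2, neg_zero]
    have hR3 := L_R3 pi0 pi2 pim pip (A p) (B p) (fderiv ℝ A p (1,0)) (fderiv ℝ A p (0,1))
      (fderiv ℝ B p (1,0)) (fderiv ℝ B p (0,1)) h0 h2
    rw [hTwo, hNeg2] at hR3
    rw [fderiv_pi_comp pi2 A p (hdA p hpU) (1,0), fderiv_pi_comp pi2 B p (hdB p hpU) (0,1)]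
    simpa using hR3.symm
  · rintro ⟨flat, hco⟩ l habs p hpU
    have hl : l ≠ 0 := by
      intro h
      rw [h] at habs
      simp at habs
    have hflatp := flat p hpU
    rw [← hflat1 p hpU] at hflatp
    rw [hcurv 1 one_ne_zero p hpU] at hflatp
    have hsum0 : CmatZero pi0 pi2 pim pip (A p) (B p) (fderiv ℝ A p (1,0)) (fderiv ℝ A p (0,1)) (fderiv ℝ B p (1,0)) (fderiv ℝ B p (0,1)) + CmatOne pi0 pi2 pim pip (A p) (B p) (fderiv ℝ A p (1,0)) (fderiv ℝ A p (0,1)) (fderiv ℝ B p (1,0)) (fderiv ℝ B p (0,1)) + (CmatTwo pi0 pi2 pim pip (A p) (B p) (fderiv ℝ A p (1,0)) (fderiv ℝ A p (0,1)) (fderiv ℝ B p (1,0)) (fderiv ℝ B p (0,1)) + CmatNegTwo pi0 pi2 pim pip (A p) (B p) (fderiv ℝ A p (1,0)) (fderiv ℝ A p (0,1)) (fderiv ℝ B p (1,0)) (fderiv ℝ B p (0,1))) + CmatNegOne pi0 pi2 pim pip (A p) (B p) (fderiv ℝ A p (1,0)) (fderiv ℝ A p (0,1)) (fderiv ℝ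 B p (1,0)) (fderiv ℝ B p (0,1)) = 0 := by
      rw [← hflatp]
      module
    obtain ⟨k0, k1, k2, k3⟩ := eigen_unique _ _ _ _
      (L_mem0 _ _ _ _ _ _ _ _ _ _ h0 h2 hm hp) (L_mem1 _ _ _ _ _ _ _ _ _ _ h0 h2 hm hp)
      (L_mem2 _ _ _ _ _ _ _ _ _ _ h0 h2 hm hp) (L_memm1 _ _ _ _ _ _ _ _ _ _ h0 h2 hm hp) hsum0
    have hG : pi2 (fderiv ℝ A p (1,0)) + pi2 (fderiv ℝ B p (0,1)) = 0 := by
      have h := hco p hpU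
      rwa [fderiv_pi_comp pi2 A p (hdA p hpU) (1,0),
        fderiv_pi_comp pi2 B p (hdB p hpU) (0,1)] at h
    have hR3 := L_R3 pi0 pi2 pim pip (A p) (B p) (fderiv ℝ A p (1,0)) (fderiv ℝ A p (0,1))
      (fderiv ℝ B p (1,0)) (fderiv ℝ B p (0,1)) h0 h2
    rw [hG] at hR3
    have hdiff : CmatTwo pi0 pi2 pim pip (A p) (B p) (fderiv ℝ A p (1,0)) (fderiv ℝ A p (0,1)) (fderiv ℝ B p (1,0)) (fderiv ℝ B p (0,1)) - CmatNegTwo pi0 pi2 pim pip (A p) (B p) (fderiv ℝ A p (1,0)) (fderiv ℝ A p (0,1)) (fderiv ℝ B p (1,0)) (fderiv ℝ B p (0,1)) = 0 := by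
      rcases smul_eq_zero.mp hR3 with h' | h'
      · exact absurd h' Complex.I_ne_zero
      · exact h'
    have hTwo : CmatTwo pi0 pi2 pim pip (A p) (B p) (fderiv ℝ A p (1,0)) (fderiv ℝ A p (0,1)) (fderiv ℝ B p (1,0)) (fderiv ℝ B p (0,1)) = 0 := by
      have h2' : (2:ℂ) • (CmatTwo pi0 pi2 pim pip (A p) (B p) (fderiv ℝ A p (1,0)) (fderiv ℝ A p (0,1)) (fderiv ℝ B p (1,0)) (fderiv ℝ B p (0,1)))
          = ((CmatTwo pi0 pi2 pim pip (A p) (B p) (fderiv ℝ A p (1,0)) (fderiv ℝ A p (0,1)) (fderiv ℝ B p (1,0)) (fderiv ℝ B p (0,1))) + (CmatNegTwo pi0 pi2 pim pip (A p) (B p) (fderiv ℝ A p (1,0)) (fderiv ℝ A p (0,1)) (fderiv ℝ B p (1,0)) (fderiv ℝ B p (0,1)))) + ((CmatTwo pi0 pi2 pim pip (A p) (B p) (fderiv ℝ A p (1,0)) (fderiv ℝ A p (0,1)) (fderiv ℝ B p (1,0)) (fderiv ℝ B p (0,1))) - (CmatNegTwo pi0 pi2 pim pip (A p) (B p) (fderiv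 ℝ A p (1,0)) (fderiv ℝ A p (0,1)) (fderiv ℝ B p (1,0)) (fderiv ℝ B p (0,1)))) := by module
      rw [k2, hdiff, add_zero] at h2'
      have := smul_eq_zero.mp h2'
      rcases this with h' | h'
      · norm_num at h'
      · exact h'
    have hNeg2 : CmatNegTwo pi0 pi2 pim pip (A p) (B p) (fderiv ℝ A p (1,0)) (fderiv ℝ A p (0,1)) (fderiv ℝ B p (1,0)) (fderiv ℝ B p (0,1)) = 0 := by
      have := k2
      rw [hTwo, zero_add] at this
      exact this
    rw [hcurv l hl p hpU, k0, k1, k3, hTwo, hNeg2]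
    simp
end
end
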